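/- arXiv:math/0502053 — 5 statements merged into one kernel-verified Lean document; each statement's English description precedes it below -/
import Mathlib

section
/- In the PN space (ℝ, ν) with ν_p(t) = a·t/(t+|p|) for 0 < t < ∞ and fixed a ∈ (0,1), ν_0 = ε_0, every subset A ⊆ ℝ containing some nonzero point is not D-bounded; in fact the only D-bounded subsets are subsets of {0}. -/
open Filter

/-- ν_p(t) = a·t/(t+|p|) for p ≠ 0 and 0 < t, ν_0 = ε_0. -/
noncomputable def nu (a p x : ℝ) : ℝ :=
  if p = 0 then (if 0 < x then 1 else 0)
  else (if 0 < x then a * x / (x + |p|) else 0)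

lemma nu_nonneg (a p x : ℝ) (ha : 0 < a) : 0 ≤ nu a p x := by
  unfold nu
  split_ifs with h1 h2 h3 <;> positivity

/-- in the PN space (ℝ, ν) with ν_p(t) = a·t/(t+|p|), a ∈ (0,1),
ν_0 = ε_0, a nonempty set A is D-bounded iff A ⊆ {0}; in particular any set
containing a nonzero point is not D-bounded. -/
theorem stmt2 (a : ℝ) (ha : a ∈ Set.Ioo (0:ℝ) 1) (A : Set ℝ) (hA : A.Nonempty) :
    Tendsto (fun x => sInf ((fun p => nu a p x) '' A)) atTop (nhds 1) ↔ A ⊆ {0} := by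
  obtain ⟨ha0, ha1⟩ := ha
  constructor
  · intro ht p hp
    by_contra hp0
    simp only [Set.mem_singleton_iff] at hp0
    have hbdd : ∀ x : ℝ, BddBelow ((fun p => nu a p x) '' A) := by
      intro x
      exact ⟨0, fun y ⟨q, _, hq⟩ => hq ▸ nu_nonneg a q x ha0⟩
    have hle : ∀ x : ℝ, 0 < x →
        sInf ((fun p => nu a p x) '' A) ≤ a := by
      intro x hx
      refine le_trans (csInf_le (hbdd x) ⟨p, hp, rfl⟩) ?_
      have : nu a p x = a * x / (x + |p|) := by
        simp [nu, hp0, hx]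
      show nu a p x ≤ a
      rw [this]
      rw [div_le_iff₀ (by positivity)]
      nlinarith [abs_nonneg p, hx]
    have hev : ∀ᶠ x in atTop, a < sInf ((fun p => nu a p x) '' A) :=
      ht.eventually (eventually_gt_nhds ha1)
    obtain ⟨x, hx1, hx2⟩ := (hev.and (eventually_gt_atTop 0)).exists
    exact absurd (hle x hx2) (not_le.mpr hx1)
  · intro hsub
    obtain ⟨p, hp⟩ := hA
    have hA0 : A = {0} := Set.eq_singleton_iff_nonempty_unique_mem.mpr ⟨⟨p, hp⟩, hsub⟩
    have : (fun x => sInf ((fun p => nu a p x) '' A)) =ᶠ[atTop] fun _ => 1 := by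
      filter_upwards [eventually_gt_atTop (0:ℝ)] with x hx
      rw [hA0]
      simp [nu, hx]
    exact Tendsto.congr' this.symm tendsto_const_nhds
end

section
/- In the PN space (ℚ, ν, τ_π, τ_M) with ν_p(t) = t/(t+|p|), if a, b are irrational with a < b, then A = [a,b] ∩ ℚ is D-bounded and closed in the strong topology but not D-compact (there is a sequence in A with no strongly convergent subsequence with limit in A). -/
open Filter

/-- ν_p(t) = t/(t+|p|) for t > 0, ν_p(0) = 0, on ℚ. -/
noncomputable def nuQ (p : ℚ) (t : ℝ) : ℝ :=
  if 0 < t then t / (t + |(p : ℝ)|) else 0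

/-- Strong convergence in the PN space (ℚ, ν, τ_π, τ_M). -/
def SConv (s : ℕ → ℚ) (q : ℚ) : Prop :=
  ∀ l : ℝ, 0 < l → ∃ N : ℕ, ∀ m ≥ N, nuQ (s m - q) l > 1 - l

/-- Probabilistic radius (infimum form). -/
noncomputable def radius (A : Set ℚ) (t : ℝ) : ℝ :=
  sInf ((fun p => nuQ p t) '' A)

/-! On rational points `ν_p(t) > 1 - t` unwinds to `(1 - t) |p| < t²`, so strong convergence in this
PN space is ordinary convergence of the real casts. Hence `A = [a, b] ∩ ℚ` is strongly closed,
being the trace of a closed real set, and D-bounded since `ν_p(t) ≥ t / (t + max |a| |b|)` on `A`.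
It is not D-compact: a sequence in `A` tending to the irrational endpoint `a` has no subsequence
with a rational strong limit. -/

open Topology Set

lemma nuQ_of_pos {t : ℝ} (ht : 0 < t) (p : ℚ) : nuQ p t = t / (t + |(p : ℝ)|) := if_pos ht

lemma nuQ_nonneg (p : ℚ) (t : ℝ) : 0 ≤ nuQ p t := by
  unfold nuQ
  split_ifs <;> positivity

lemma nuQ_le_one (p : ℚ) (t : ℝ) : nuQ p t ≤ 1 := by
  unfold nuQ
  split_ifs with ht
  · exact div_le_one_of_le₀ (le_add_of_nonneg_right (abs_nonneg _)) (by positivity)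
  · exact zero_le_one

lemma div_add_le_nuQ {p : ℚ} {t M : ℝ} (ht : 0 < t) (hp : |(p : ℝ)| ≤ M) :
    t / (t + M) ≤ nuQ p t := by
  rw [nuQ_of_pos ht]
  gcongr

lemma one_sub_lt_nuQ_iff {l : ℝ} (hl : 0 < l) (x : ℚ) :
    1 - l < nuQ x l ↔ (1 - l) * |(x : ℝ)| < l ^ 2 := by
  rw [nuQ_of_pos hl, lt_div_iff₀ (by positivity)]
  constructor <;> intro h <;> nlinarith

theorem sConv_iff_tendsto {s : ℕ → ℚ} {q : ℚ} :
    SConv s q ↔ Tendsto (fun n => (s n : ℝ)) atTop (𝓝 (q : ℝ)) := by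
  simp only [SConv, gt_iff_lt, Metric.tendsto_atTop, Real.dist_eq]
  constructor
  · intro h ε hε
    -- with `l ≤ 1/2`, `(1 - l) |x| < l²` gives `|x| < 2 l² ≤ l ≤ ε / 2`
    set l := min (ε / 2) (1 / 2)
    have hl : 0 < l := lt_min (by linarith) (by norm_num)
    obtain ⟨N, hN⟩ := h l hl
    refine ⟨N, fun m hm => ?_⟩
    have hsmall := (one_sub_lt_nuQ_iff hl _).1 (hN m hm)
    push_cast at hsmall
    nlinarith [min_le_left (ε / 2) (1 / 2), min_le_right (ε / 2) (1 / 2),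
      abs_nonneg ((s m : ℝ) - q)]
  · intro h l hl
    obtain ⟨N, hN⟩ := h (l ^ 2) (by positivity)
    refine ⟨N, fun m hm => (one_sub_lt_nuQ_iff hl _).2 ?_⟩
    push_cast
    nlinarith [hN m hm, abs_nonneg ((s m : ℝ) - q)]

theorem tendsto_radius_of_abs_le {A : Set ℚ} (hA : A.Nonempty) {M : ℝ}
    (hM : ∀ p ∈ A, |(p : ℝ)| ≤ M) : Tendsto (radius A) atTop (𝓝 1) := by
  obtain ⟨p₀, hp₀⟩ := hA
  unfold radius
  have hbdd : ∀ t, BddBelow ((fun p => nuQ p t) '' A) := fun t =>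
    ⟨0, by rintro _ ⟨p, _, rfl⟩; exact nuQ_nonneg p t⟩
  have hlower : Tendsto (fun t : ℝ => 1 - M / (t + M)) atTop (𝓝 1) := by
    simpa using tendsto_const_nhds.sub <|
      tendsto_const_nhds.div_atTop (tendsto_atTop_add_const_right _ M tendsto_id)
  refine tendsto_of_tendsto_of_tendsto_of_le_of_le' hlower tendsto_const_nhds ?_
    (Eventually.of_forall fun t =>
      (csInf_le (hbdd t) (mem_image_of_mem _ hp₀)).trans (nuQ_le_one p₀ t))
  filter_upwards [eventually_gt_atTop (max 0 (-M))] with t ht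
  have ht0 : 0 < t := (le_max_left _ _).trans_lt ht
  have htM : t + M ≠ 0 := by linarith [le_max_right 0 (-M)]
  refine le_csInf ⟨_, mem_image_of_mem _ hp₀⟩ ?_
  rintro _ ⟨p, hp, rfl⟩
  calc 1 - M / (t + M) = t / (t + M) := by field_simp; ring
    _ ≤ nuQ p t := div_add_le_nuQ ht0 (hM p hp)

theorem mem_of_sConv {S : Set ℝ} (hS : IsClosed S) {s : ℕ → ℚ} (hs : ∀ n, (s n : ℝ) ∈ S)
    {q : ℚ} (hq : SConv s q) : (q : ℝ) ∈ S :=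
  hS.mem_of_tendsto (sConv_iff_tendsto.1 hq) (Eventually.of_forall hs)

theorem not_sConv_of_tendsto_irrational {s : ℕ → ℚ} {x : ℝ} (hx : Irrational x)
    (hs : Tendsto (fun n => (s n : ℝ)) atTop (𝓝 x)) (q : ℚ) : ¬ SConv s q := fun hq =>
  hx ⟨q, tendsto_nhds_unique (sConv_iff_tendsto.1 hq) hs⟩

theorem stmt6_general (a b : ℝ) (ha : Irrational a) (hab : a < b) :
    Tendsto (radius {p : ℚ | a ≤ (p : ℝ) ∧ (p : ℝ) ≤ b}) atTop (nhds 1) ∧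
    (∀ s : ℕ → ℚ, (∀ n, s n ∈ {p : ℚ | a ≤ (p : ℝ) ∧ (p : ℝ) ≤ b}) →
      ∀ q : ℚ, SConv s q → q ∈ {p : ℚ | a ≤ (p : ℝ) ∧ (p : ℝ) ≤ b}) ∧
    ¬ (∀ s : ℕ → ℚ, (∀ n, s n ∈ {p : ℚ | a ≤ (p : ℝ) ∧ (p : ℝ) ≤ b}) →
        ∃ q ∈ {p : ℚ | a ≤ (p : ℝ) ∧ (p : ℝ) ≤ b},
          ∃ st : ℕ → ℕ, StrictMono st ∧ SConv (s ∘ st) q) := by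
  refine ⟨?_, fun s hs q hq => mem_of_sConv isClosed_Icc hs hq, fun hcompact => ?_⟩
  · obtain ⟨p₀, hap₀, hp₀b⟩ := exists_rat_btwn hab
    exact tendsto_radius_of_abs_le ⟨p₀, hap₀.le, hp₀b.le⟩ fun p hp => abs_le_max_abs_abs hp.1 hp.2
  · obtain ⟨s, -, hsA, hs⟩ :=
      Rat.denseRange_cast.exists_seq_strictAnti_tendsto_of_lt Rat.cast_mono hab
    obtain ⟨q, -, st, hst, hq⟩ := hcompact s fun n => ⟨(hsA n).1.le, (hsA n).2.le⟩
    exact not_sConv_of_tendsto_irrational ha (hs.comp hst.tendsto_atTop) q hq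

/-- for irrational a < b, the set A = [a,b] ∩ ℚ is D-bounded and
(sequentially) closed in the strong topology, but not D-compact: some sequence
in A has no strongly convergent subsequence with limit in A. -/
theorem stmt6 (a b : ℝ) (ha : Irrational a) (hb : Irrational b) (hab : a < b) :
    Tendsto (radius {p : ℚ | a ≤ (p : ℝ) ∧ (p : ℝ) ≤ b}) atTop (nhds 1) ∧
    (∀ s : ℕ → ℚ, (∀ n, s n ∈ {p : ℚ | a ≤ (p : ℝ) ∧ (p : ℝ) ≤ b}) →
      ∀ q : ℚ, SConv s q → q ∈ {p : ℚ | a ≤ (p : ℝ) ∧ (p : ℝ) ≤ b}) ∧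
    ¬ (∀ s : ℕ → ℚ, (∀ n, s n ∈ {p : ℚ | a ≤ (p : ℝ) ∧ (p : ℝ) ≤ b}) →
        ∃ q ∈ {p : ℚ | a ≤ (p : ℝ) ∧ (p : ℝ) ≤ b},
          ∃ st : ℕ → ℕ, StrictMono st ∧ SConv (s ∘ st) q) :=
  stmt6_general a b ha hab
end

section
/- Let (V, ν, τ, τ*) be a PN space whose triangle function is τ_T for a continuous t-norm T. If sequences p_m → p and q_m → q strongly, then p_m + q_m → p + q strongly. -/
/-- in a PN space whose triangle function is τ_T for a continuous
t-norm T, if p_m → p and q_m → q strongly then p_m + q_m → p + q strongly. -/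
theorem stmt11 {V : Type*} [AddCommGroup V]
    (T : ℝ → ℝ → ℝ)
    (hTcont : Continuous fun q : ℝ × ℝ => T q.1 q.2)
    (hTcomm : ∀ x y, T x y = T y x)
    (hTassoc : ∀ x y z, T (T x y) z = T x (T y z))
    (hTmono : ∀ x y z, x ≤ y → T x z ≤ T y z)
    (hTone : ∀ x ∈ Set.Icc (0:ℝ) 1, T x 1 = x)
    (nu : V → ℝ → ℝ)
    (hmono : ∀ p, Monotone (nu p))
    (h01 : ∀ p x, nu p x ∈ Set.Icc (0:ℝ) 1)
    (hzero : ∀ p x, x ≤ 0 → nu p x = 0)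
    (heps : ∀ x > (0:ℝ), nu 0 x = 1)
    (hneg : ∀ p : V, nu (-p) = nu p)
    (htri : ∀ (p q : V) (x : ℝ),
      sSup {y | ∃ s t : ℝ, s + t = x ∧ y = T (nu p s) (nu q t)} ≤ nu (p + q) x)
    (pm qm : ℕ → V) (p q : V)
    (hp : ∀ l : ℝ, 0 < l → ∃ N : ℕ, ∀ m ≥ N, nu (pm m - p) l > 1 - l)
    (hq : ∀ l : ℝ, 0 < l → ∃ N : ℕ, ∀ m ≥ N, nu (qm m - q) l > 1 - l) :
    ∀ l : ℝ, 0 < l → ∃ N : ℕ, ∀ m ≥ N, nu (pm m + qm m - (p + q)) l > 1 - l := by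
  intro l hl
  have h11 : T 1 1 = 1 := hTone 1 (by norm_num)
  -- continuity of T at (1,1)
  have htend : Filter.Tendsto (fun z : ℝ × ℝ => T z.1 z.2) (nhds (1, 1)) (nhds 1) := by
    have := hTcont.continuousAt (x := ((1 : ℝ), (1 : ℝ)))
    simpa [ContinuousAt, h11] using this
  have hev : ∀ᶠ z : ℝ × ℝ in nhds (1, 1), T z.1 z.2 > 1 - l :=
    htend.eventually (eventually_gt_nhds (by linarith))
  obtain ⟨δ₀, hδ₀, hball⟩ := Metric.eventually_nhds_iff.mp hev
  set δ := min (min (δ₀ / 2) (l / 2)) (1 / 2) with hδdef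
  have hδpos : 0 < δ := lt_min (lt_min (by linarith) (by linarith)) (by norm_num)
  have hδle₀ : δ ≤ δ₀ / 2 := le_trans (min_le_left _ _) (min_le_left _ _)
  have hδlel : δ ≤ l / 2 := le_trans (min_le_left _ _) (min_le_right _ _)
  have key : ∀ x y : ℝ, 1 - δ < x → x ≤ 1 → 1 - δ < y → y ≤ 1 → T x y > 1 - l := by
    intro x y hx1 hx2 hy1 hy2
    have hd : dist ((x, y) : ℝ × ℝ) (1, 1) < δ₀ := by
      rw [Prod.dist_eq]
      have : |x - 1| < δ₀ := by rw [abs_sub_lt_iff]; constructor <;> linarith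
      have : |y - 1| < δ₀ := by rw [abs_sub_lt_iff]; constructor <;> linarith
      simp only [Real.dist_eq]
      apply max_lt <;> assumption
    exact hball hd
  obtain ⟨N₁, hN₁⟩ := hp δ hδpos
  obtain ⟨N₂, hN₂⟩ := hq δ hδpos
  refine ⟨max N₁ N₂, fun m hm => ?_⟩
  have hm₁ := hN₁ m (le_trans (le_max_left _ _) hm)
  have hm₂ := hN₂ m (le_trans (le_max_right _ _) hm)
  set A := pm m - p with hA
  set B := qm m - q with hB
  have ha : 1 - δ < nu A (l / 2) :=
    lt_of_lt_of_le hm₁ (hmono A hδlel)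
  have hb : 1 - δ < nu B (l / 2) :=
    lt_of_lt_of_le hm₂ (hmono B hδlel)
  have ha1 : nu A (l / 2) ≤ 1 := (h01 A _).2
  have hb1 : nu B (l / 2) ≤ 1 := (h01 B _).2
  have hT : T (nu A (l / 2)) (nu B (l / 2)) > 1 - l := key _ _ ha ha1 hb hb1
  have hmem : T (nu A (l / 2)) (nu B (l / 2)) ∈
      {y | ∃ s t : ℝ, s + t = l ∧ y = T (nu A s) (nu B t)} :=
    ⟨l / 2, l / 2, by ring, rfl⟩
  have hbdd : BddAbove {y | ∃ s t : ℝ, s + t = l ∧ y = T (nu A s) (nu B t)} := by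
    refine ⟨1, fun y hy => ?_⟩
    obtain ⟨s, t, _, rfl⟩ := hy
    calc T (nu A s) (nu B t) ≤ T 1 (nu B t) := hTmono _ _ _ (h01 A s).2
      _ = T (nu B t) 1 := hTcomm _ _
      _ = nu B t := hTone _ (h01 B t)
      _ ≤ 1 := (h01 B t).2
  have hsup : T (nu A (l / 2)) (nu B (l / 2)) ≤
      sSup {y | ∃ s t : ℝ, s + t = l ∧ y = T (nu A s) (nu B t)} :=
    le_csSup hbdd hmem
  have hfinal := le_trans hsup (htri A B l)
  have heq : A + B = pm m + qm m - (p + q) := by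
    rw [hA, hB]; abel
  rw [heq] at hfinal
  linarith
end

section
/- In a Šerstnev PN space, the Šerstnev condition implies the homogeneity ν_{λp}(x) = ν_p(x/|λ|) for all p ∈ V, λ ≠ 0, and x ∈ ℝ, given ν_{−p} = ν_p and that ν_p = τ_M(ν_{αp}, ν_{(1−α)p}) for all α ∈ [0,1], where τ_M(F,G)(x) = sup_{s+t=x} min(F(s), G(t)). -/
/-!
If `ν_{a q}` and `ν_{b q}` are the dilations `ν_q(· / a)` and `ν_q(· / b)`, the Šerstnev equality
for `(a + b) q = a q + b q` shows that `ν_{(a+b) q}` is the dilation by `a + b`, since `τ_M` of two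
dilations of one monotone function is the dilation by the sum. With compatibility with products
and inverses this gives homogeneity at every positive rational. The Šerstnev equality also makes
`ν_{α p}` decrease in `α ∈ [0, 1]`, so rationals `r > λ` give `ν_p(x / r) ≤ ν_{λp}(x)`, and
left-continuity yields `ν_p(x / λ) ≤ ν_{λp}(x)`; applied to `λ p` and `λ⁻¹` this is the reverse
inequality.
-/

open Set Filter Topology

/-- The triangle function `τ_M(F, G)`. -/
noncomputable def supMinConv (F G : ℝ → ℝ) (x : ℝ) : ℝ :=
  sSup {y | ∃ s t : ℝ, s + t = x ∧ y = min (F s) (G t)}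

section SupMinConv

variable {F G : ℝ → ℝ}

theorem supMinConv_le_left (hF : Monotone F) (hF₀ : ∀ s, 0 ≤ F s) (hG : ∀ t < 0, G t ≤ 0)
    (x : ℝ) : supMinConv F G x ≤ F x := by
  refine csSup_le ⟨_, x, 0, add_zero x, rfl⟩ ?_
  rintro _ ⟨s, t, hst, rfl⟩
  rcases le_or_gt 0 t with ht | ht
  · exact (min_le_left _ _).trans (hF (by linarith))
  · exact (min_le_right _ _).trans ((hG t ht).trans (hF₀ x))

theorem supMinConv_comp_div (hF : Monotone F) {a b : ℝ} (ha : 0 < a) (hb : 0 < b) (x : ℝ) :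
    supMinConv (fun s ↦ F (s / a)) (fun t ↦ F (t / b)) x = F (x / (a + b)) := by
  have hab : 0 < a + b := add_pos ha hb
  -- `s + t = x` forces `s / a ≤ x / (a + b)` or `t / b ≤ x / (a + b)`
  have hle : ∀ s t, s + t = x → min (F (s / a)) (F (t / b)) ≤ F (x / (a + b)) := by
    intro s t hst
    rcases le_or_gt (s / a) (x / (a + b)) with hs | hs
    · exact (min_le_left _ _).trans (hF hs)
    · refine (min_le_right _ _).trans (hF ?_)
      rw [div_lt_div_iff₀ hab ha] at hs
      rw [div_le_div_iff₀ hb hab]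
      nlinarith
  have hbdd : ∀ y ∈ {y | ∃ s t : ℝ, s + t = x ∧ y = min (F (s / a)) (F (t / b))},
      y ≤ F (x / (a + b)) := by
    rintro _ ⟨s, t, hst, rfl⟩
    exact hle s t hst
  refine le_antisymm (csSup_le ⟨_, x, 0, add_zero x, rfl⟩ hbdd) (le_csSup ⟨_, hbdd⟩ ?_)
  refine ⟨a * (x / (a + b)), b * (x / (a + b)), by field_simp, ?_⟩
  simp only [mul_div_cancel_left₀ _ ha.ne', mul_div_cancel_left₀ _ hb.ne', min_self]

end SupMinConv

section Serstnev

variable {V : Type*} [AddCommGroup V] [Module ℝ V] {nu : V → ℝ → ℝ}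

def IsSerstnev (nu : V → ℝ → ℝ) : Prop :=
  ∀ (p : V) (α : ℝ), α ∈ Icc (0 : ℝ) 1 → ∀ x,
    nu p x = supMinConv (nu (α • p)) (nu ((1 - α) • p)) x

def IsHomogeneousAt (nu : V → ℝ → ℝ) (c : ℝ) : Prop :=
  ∀ q x, nu (c • q) x = nu q (x / c)

theorem isHomogeneousAt_one : IsHomogeneousAt nu 1 := by
  intro q x
  rw [one_smul, div_one]

theorem IsHomogeneousAt.mul {a b : ℝ} (ha : IsHomogeneousAt nu a) (hb : IsHomogeneousAt nu b) :
    IsHomogeneousAt nu (a * b) := by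
  intro q x
  rw [mul_smul, ha, hb, div_div]

theorem IsHomogeneousAt.inv {c : ℝ} (hc : c ≠ 0) (h : IsHomogeneousAt nu c) :
    IsHomogeneousAt nu c⁻¹ := by
  intro q x
  have := h (c⁻¹ • q) (x * c)
  rwa [smul_inv_smul₀ hc, mul_div_cancel_right₀ _ hc, ← div_inv_eq_mul, eq_comm] at this

theorem IsHomogeneousAt.add (hmono : ∀ p, Monotone (nu p)) (hser : IsSerstnev nu)
    {a b : ℝ} (ha₀ : 0 < a) (hb₀ : 0 < b) (ha : IsHomogeneousAt nu a) (hb : IsHomogeneousAt nu b) :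
    IsHomogeneousAt nu (a + b) := by
  intro q x
  have hab : a + b ≠ 0 := (add_pos ha₀ hb₀).ne'
  have hα : a / (a + b) ∈ Icc (0 : ℝ) 1 :=
    ⟨by positivity, (div_le_one₀ (add_pos ha₀ hb₀)).2 (by linarith)⟩
  have hsplit₁ : (a / (a + b)) • (a + b) • q = a • q := by
    rw [smul_smul, div_mul_cancel₀ _ hab]
  have hsplit₂ : (1 - a / (a + b)) • (a + b) • q = b • q := by
    rw [smul_smul]
    congr 1
    field_simp
    ring
  rw [hser _ _ hα, hsplit₁, hsplit₂, funext (ha q), funext (hb q)]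
  exact supMinConv_comp_div (hmono q) ha₀ hb₀ x

theorem isHomogeneousAt_natCast (hmono : ∀ p, Monotone (nu p)) (hser : IsSerstnev nu)
    {n : ℕ} (hn : 0 < n) : IsHomogeneousAt nu n := by
  induction n, hn using Nat.le_induction with
  | base => simpa using isHomogeneousAt_one
  | succ n _ ih =>
    push_cast
    exact ih.add hmono hser (by positivity) one_pos isHomogeneousAt_one

theorem isHomogeneousAt_ratCast (hmono : ∀ p, Monotone (nu p)) (hser : IsSerstnev nu)
    {r : ℚ} (hr : 0 < r) : IsHomogeneousAt nu r := by
  obtain ⟨m, hm⟩ := Int.eq_ofNat_of_zero_le (Rat.num_nonneg.2 hr.le)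
  have hm₀ : 0 < m := by
    have := Rat.num_pos.2 hr
    omega
  rw [Rat.cast_def, hm, Int.cast_natCast, div_eq_mul_inv]
  exact (isHomogeneousAt_natCast hmono hser hm₀).mul
    ((isHomogeneousAt_natCast hmono hser r.den_pos).inv (by positivity))

theorem nu_le_nu_smul (hmono : ∀ p, Monotone (nu p)) (h₀ : ∀ p x, 0 ≤ nu p x)
    (hzero : ∀ p x, x ≤ 0 → nu p x = 0) (hser : IsSerstnev nu)
    {α : ℝ} (hα : α ∈ Icc (0 : ℝ) 1) (q : V) (x : ℝ) : nu q x ≤ nu (α • q) x := by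
  rw [hser q α hα x]
  exact supMinConv_le_left (hmono _) (h₀ _) (fun t ht ↦ (hzero _ t ht.le).le) x

theorem nu_div_le_nu_smul (hmono : ∀ p, Monotone (nu p)) (h₀ : ∀ p x, 0 ≤ nu p x)
    (hzero : ∀ p x, x ≤ 0 → nu p x = 0)
    (hlc : ∀ (p : V) (x : ℝ), 0 < x → Tendsto (nu p) (𝓝[<] x) (𝓝 (nu p x)))
    (hser : IsSerstnev nu)
    {l : ℝ} (hl : 0 < l) (q : V) (x : ℝ) : nu q (x / l) ≤ nu (l • q) x := by
  rcases le_or_gt x 0 with hx | hx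
  · rw [hzero q _ (div_nonpos_of_nonpos_of_nonneg hx hl.le)]
    exact h₀ _ _
  have hxl : 0 < x / l := div_pos hx hl
  -- compare with a rational scalar `r ∈ (l, x / y)`, at which homogeneity is known
  have hbelow : ∀ y ∈ Ioo 0 (x / l), nu q y ≤ nu (l • q) x := by
    rintro y ⟨hy₀, hy⟩
    have hly : l < x / y := by
      rw [lt_div_iff₀ hl] at hy
      rw [lt_div_iff₀ hy₀]
      linarith
    obtain ⟨r, hlr, hry⟩ := exists_rat_btwn hly
    have hr : (0 : ℝ) < r := hl.trans hlr
    have hyr : y ≤ x / r := by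
      rw [lt_div_iff₀ hy₀] at hry
      rw [le_div_iff₀ hr]
      linarith
    have hα : l / r ∈ Icc (0 : ℝ) 1 := ⟨by positivity, (div_le_one₀ hr).2 hlr.le⟩
    calc nu q y ≤ nu q (x / r) := hmono q hyr
      _ = nu ((r : ℝ) • q) x :=
        (isHomogeneousAt_ratCast hmono hser (Rat.cast_pos.1 hr) q x).symm
      _ ≤ nu ((l / r) • (r : ℝ) • q) x := nu_le_nu_smul hmono h₀ hzero hser hα _ x
      _ = nu (l • q) x := by rw [smul_smul, div_mul_cancel₀ _ hr.ne']
  refine le_of_tendsto (hlc q _ hxl) ?_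
  filter_upwards [Ioo_mem_nhdsLT hxl] with y hy using hbelow y hy

theorem isHomogeneousAt_of_pos (hmono : ∀ p, Monotone (nu p)) (h₀ : ∀ p x, 0 ≤ nu p x)
    (hzero : ∀ p x, x ≤ 0 → nu p x = 0)
    (hlc : ∀ (p : V) (x : ℝ), 0 < x → Tendsto (nu p) (𝓝[<] x) (𝓝 (nu p x)))
    (hser : IsSerstnev nu)
    {l : ℝ} (hl : 0 < l) : IsHomogeneousAt nu l := by
  intro q x
  refine le_antisymm ?_ (nu_div_le_nu_smul hmono h₀ hzero hlc hser hl q x)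
  have := nu_div_le_nu_smul hmono h₀ hzero hlc hser (inv_pos.2 hl) (l • q) (x / l)
  rwa [div_inv_eq_mul, div_mul_cancel₀ _ hl.ne', inv_smul_smul₀ hl.ne'] at this

end Serstnev

theorem stmt18_general {V : Type*} [AddCommGroup V] [Module ℝ V]
    (nu : V → ℝ → ℝ)
    (hmono : ∀ p, Monotone (nu p))
    (h01 : ∀ p x, nu p x ∈ Set.Icc (0:ℝ) 1)
    (hzero : ∀ p x, x ≤ 0 → nu p x = 0)
    (hlc : ∀ (p : V) (x : ℝ), 0 < x →
      Filter.Tendsto (nu p) (nhdsWithin x (Set.Iio x)) (nhds (nu p x)))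
    (hneg : ∀ p : V, nu (-p) = nu p)
    (hser : ∀ (p : V) (α : ℝ), α ∈ Set.Icc (0:ℝ) 1 → ∀ x : ℝ,
      nu p x = sSup {y | ∃ s t : ℝ, s + t = x ∧
        y = min (nu (α • p) s) (nu ((1 - α) • p) t)}) :
    ∀ (p : V) (l : ℝ), l ≠ 0 → ∀ x : ℝ, nu (l • p) x = nu p (x / |l|) := by
  have hpos : ∀ l : ℝ, 0 < l → IsHomogeneousAt nu l := fun l ↦
    isHomogeneousAt_of_pos hmono (fun p x ↦ (h01 p x).1) hzero hlc hser
  intro p l hl x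
  rcases hl.lt_or_gt with hl | hl
  · rw [abs_of_neg hl, ← hpos (-l) (neg_pos.2 hl), neg_smul, hneg]
  · rw [abs_of_pos hl, hpos l hl]

/-- in a Šerstnev PN space — ν_p = τ_M(ν_{αp}, ν_{(1−α)p}) for all
α ∈ [0,1], with τ_M(F,G)(x) = sup_{s+t=x} min(F(s),G(t)), and ν_{−p} = ν_p —
one has the homogeneity ν_{λp}(x) = ν_p(x/|λ|) for all p, λ ≠ 0 and x. -/
theorem stmt18 {V : Type*} [AddCommGroup V] [Module ℝ V]
    (nu : V → ℝ → ℝ)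
    (hmono : ∀ p, Monotone (nu p))
    (h01 : ∀ p x, nu p x ∈ Set.Icc (0:ℝ) 1)
    (hzero : ∀ p x, x ≤ 0 → nu p x = 0)
    (hlc : ∀ (p : V) (x : ℝ), 0 < x →
      Filter.Tendsto (nu p) (nhdsWithin x (Set.Iio x)) (nhds (nu p x)))
    (heps : ∀ x > (0:ℝ), nu 0 x = 1)
    (heq0 : ∀ p : V, (∀ x > (0:ℝ), nu p x = 1) → p = 0)
    (hneg : ∀ p : V, nu (-p) = nu p)
    (hser : ∀ (p : V) (α : ℝ), α ∈ Set.Icc (0:ℝ) 1 → ∀ x : ℝ,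
      nu p x = sSup {y | ∃ s t : ℝ, s + t = x ∧
        y = min (nu (α • p) s) (nu ((1 - α) • p) t)}) :
    ∀ (p : V) (l : ℝ), l ≠ 0 → ∀ x : ℝ, nu (l • p) x = nu p (x / |l|) :=
  stmt18_general nu hmono h01 hzero hlc hneg hser
end

section
/- In the PN space (ℝ, ν, τ_π, τ_M) with ν_p(t) = t/(t+|p|), a subset A ⊆ ℝ is D-bounded if and only if A is bounded in the usual sense (sup{|p| : p ∈ A} < ∞). -/
/-! For a single point `p`, `ν_p(x) = x / (x + |p|)` tends to `1`. If `|p| ≤ M` on `A`, then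
`ν_M ≤ inf_{p ∈ A} ν_p ≤ ν_q` for any `q ∈ A`, and the infimum is squeezed to `1`. If `A` is
unbounded, for each `x > 0` some `p ∈ A` has `|p| ≥ x`, so `ν_p(x) ≤ 1/2` and the infimum never
exceeds `1/2`. -/

open Filter

/-- The paper's `ν_p(t)`, extended by `0` to `t ≤ 0`. -/
noncomputable def nuR (p : ℝ) (t : ℝ) : ℝ :=
  if 0 < t then t / (t + |p|) else 0

/-- `inf {ν_p(x) : p ∈ A}`, whose left limit in `x` is the paper's radius `R_A(x)`. -/
noncomputable def infNu (A : Set ℝ) (x : ℝ) : ℝ :=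
  sInf ((fun p => nuR p x) '' A)

lemma nuR_of_pos (p : ℝ) {t : ℝ} (ht : 0 < t) : nuR p t = t / (t + |p|) :=
  if_pos ht

lemma nuR_nonneg (p t : ℝ) : 0 ≤ nuR p t := by
  unfold nuR
  split_ifs <;> positivity

lemma nuR_le_nuR_of_abs_le {p q : ℝ} (h : |p| ≤ |q|) (t : ℝ) : nuR q t ≤ nuR p t := by
  unfold nuR
  split_ifs with ht
  · exact div_le_div_of_nonneg_left ht.le (by positivity) (by linarith)
  · exact le_rfl

lemma nuR_le_half {p t : ℝ} (h : t ≤ |p|) : nuR p t ≤ 1 / 2 := by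
  unfold nuR
  split_ifs with ht
  · rw [div_le_iff₀ (by positivity)]
    linarith
  · norm_num

lemma tendsto_nuR_atTop (p : ℝ) : Tendsto (nuR p) atTop (nhds 1) := by
  have h : Tendsto (fun x : ℝ => 1 - |p| / (x + |p|)) atTop (nhds 1) := by
    simpa using tendsto_const_nhds.sub <|
      tendsto_const_nhds.div_atTop (tendsto_atTop_add_const_right _ |p| tendsto_id)
  refine h.congr' ?_
  filter_upwards [eventually_gt_atTop 0] with x hx
  rw [nuR_of_pos p hx]
  field_simp
  ring

lemma infNu_le_nuR {A : Set ℝ} {p : ℝ} (hp : p ∈ A) (x : ℝ) : infNu A x ≤ nuR p x :=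
  csInf_le ⟨0, by rintro _ ⟨q, -, rfl⟩; exact nuR_nonneg q x⟩ ⟨p, hp, rfl⟩

lemma nuR_le_infNu {A : Set ℝ} (hA : A.Nonempty) {M : ℝ} (hM : ∀ p ∈ A, |p| ≤ M) (x : ℝ) :
    nuR M x ≤ infNu A x :=
  le_csInf (hA.image _) <| by
    rintro _ ⟨p, hp, rfl⟩
    exact nuR_le_nuR_of_abs_le ((hM p hp).trans (le_abs_self M)) x

lemma tendsto_infNu_of_bounded {A : Set ℝ} (hA : A.Nonempty) {M : ℝ}
    (hM : ∀ p ∈ A, |p| ≤ M) : Tendsto (infNu A) atTop (nhds 1) := by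
  obtain ⟨q, hq⟩ := hA
  exact tendsto_of_tendsto_of_tendsto_of_le_of_le (tendsto_nuR_atTop M) (tendsto_nuR_atTop q)
    (nuR_le_infNu ⟨q, hq⟩ hM) (infNu_le_nuR hq)

lemma infNu_le_half_of_unbounded {A : Set ℝ} (hA : ∀ M : ℝ, ∃ p ∈ A, M < |p|) (x : ℝ) :
    infNu A x ≤ 1 / 2 := by
  obtain ⟨p, hp, hxp⟩ := hA x
  exact (infNu_le_nuR hp x).trans (nuR_le_half hxp.le)

/-- in the PN space (ℝ, ν, τ_π, τ_M) with ν_p(t) = t/(t+|p|), a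
nonempty subset A is D-bounded iff it is bounded in the usual sense. -/
theorem stmt19 (A : Set ℝ) (hA : A.Nonempty) :
    Tendsto (fun x : ℝ => sInf ((fun p => nuR p x) '' A)) atTop (nhds 1)
      ↔ ∃ M : ℝ, ∀ p ∈ A, |p| ≤ M := by
  change Tendsto (infNu A) atTop (nhds 1) ↔ _
  refine ⟨fun h => ?_, fun ⟨M, hM⟩ => tendsto_infNu_of_bounded hA hM⟩
  by_contra! hunb
  have : (1 : ℝ) ≤ 1 / 2 := le_of_tendsto' h (infNu_le_half_of_unbounded hunb)
  norm_num at this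
end
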